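/- arXiv:math/0505201 — 6 statements merged into one kernel-verified Lean document; each statement's English description precedes it below -/
import Mathlib

section
/- If (x, y, z) : ℝ → ℂ (or ℂ → ℂ) satisfies the system dx/dt = x(t - x - 2z) + α₁, dy/dt = y(-t + y + 2z) + α₂, dz/dt = z(t - 2y - z) + α₃, and z(t) ≠ 0 on the domain, then the functions X = x, Y = y - α₃/z, Z = z satisfy the same system with parameters (α₁, α₂ + α₃, -α₃). -/
/-! The `z`-equation keeps its form because `z · 2α₃ / z = 2α₃` turns the parameter `α₃` into
`-α₃`. For `Y = y - α₃ / z`, substituting the `z`-equation into `(α₃ / z)' = -α₃ z' / z²` gives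
`Y' = y' + α₃ (t - 2y - z) / z + α₃² / z²`, and expanding the right-hand side of the `Y`-equation
produces the same terms. -/

theorem HasDerivAt.sub_const_div {𝕜 : Type*} [NontriviallyNormedField 𝕜] {y z : 𝕜 → 𝕜}
    {y' z' t : 𝕜} (a : 𝕜) (hy : HasDerivAt y y' t) (hz : HasDerivAt z z' t) (hzt : z t ≠ 0) :
    HasDerivAt (fun τ => y τ - a / z τ) (y' + a * z' / z t ^ 2) t := by
  refine (hy.sub ((hasDerivAt_const t a).div hz hzt)).congr_deriv ?_
  ring

section s1_identities

variable {α₂ α₃ t y z : ℂ}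

theorem s1_y_rhs_eq (hz : z ≠ 0) :
    (y - α₃ / z) * (-t + (y - α₃ / z) + 2 * z) + (α₂ + α₃) =
      y * (-t + y + 2 * z) + α₂ + α₃ * (z * (t - 2 * y - z) + α₃) / z ^ 2 := by
  field_simp
  ring

theorem s1_z_rhs_eq (hz : z ≠ 0) :
    z * (t - 2 * (y - α₃ / z) - z) + -α₃ = z * (t - 2 * y - z) + α₃ := by
  field_simp
  ring

end s1_identities

/-- The transformation s₁ : (x,y,z,t;α₁,α₂,α₃) ↦ (x, y-α₃/z, z, t; α₁, α₂+α₃, -α₃)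
preserves the third-order system. -/
theorem s1_symmetry (α₁ α₂ α₃ : ℂ) (x y z : ℂ → ℂ) (s : Set ℂ)
    (hz0 : ∀ t ∈ s, z t ≠ 0)
    (hx : ∀ t ∈ s, HasDerivAt x (x t * (t - x t - 2 * z t) + α₁) t)
    (hy : ∀ t ∈ s, HasDerivAt y (y t * (-t + y t + 2 * z t) + α₂) t)
    (hz : ∀ t ∈ s, HasDerivAt z (z t * (t - 2 * y t - z t) + α₃) t) :
    ∀ t ∈ s,
      HasDerivAt x (x t * (t - x t - 2 * z t) + α₁) t ∧
      HasDerivAt (fun τ => y τ - α₃ / z τ)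
        ((y t - α₃ / z t) * (-t + (y t - α₃ / z t) + 2 * z t) + (α₂ + α₃)) t ∧
      HasDerivAt z (z t * (t - 2 * (y t - α₃ / z t) - z t) + (-α₃)) t := by
  intro t ht
  refine ⟨hx t ht, ?_, ?_⟩
  · rw [s1_y_rhs_eq (hz0 t ht)]
    exact (hy t ht).sub_const_div α₃ (hz t ht) (hz0 t ht)
  · rw [s1_z_rhs_eq (hz0 t ht)]
    exact hz t ht
end

section
/- If (x, y, z) satisfies the system dx/dt = x(t - x - 2z) + α₁, dy/dt = y(-t + y + 2z) + α₂, dz/dt = z(t - 2y - z) + α₃, and y(t) ≠ 0 on the domain, then the functions X = x - α₂/y, Y = y, Z = z + α₂/y satisfy the same system with parameters (α₁ + α₂, -α₂, α₃ + α₂). -/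
/-! `q = α₂ / y` solves the Riccati equation `q' = q (t - y - 2z) - q²`; together with
`q y = α₂` this turns each transformed equation into a polynomial identity. -/

theorem hasDerivAt_const_div_riccati {α₂ t : ℂ} {y z : ℂ → ℂ} (hy0 : y t ≠ 0)
    (hy : HasDerivAt y (y t * (-t + y t + 2 * z t) + α₂) t) :
    HasDerivAt (fun τ => α₂ / y τ) (α₂ / y t * (t - y t - 2 * z t) - (α₂ / y t) ^ 2) t := by
  refine ((hasDerivAt_const t α₂).div hy hy0).congr_deriv ?_
  field_simp
  ring

/-- The transformation s₂ : (x,y,z,t;α₁,α₂,α₃) ↦ (x-α₂/y, y, z+α₂/y, t; α₁+α₂, -α₂, α₃+α₂)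
preserves the third-order system. -/
theorem s2_symmetry (α₁ α₂ α₃ : ℂ) (x y z : ℂ → ℂ) (s : Set ℂ)
    (hy0 : ∀ t ∈ s, y t ≠ 0)
    (hx : ∀ t ∈ s, HasDerivAt x (x t * (t - x t - 2 * z t) + α₁) t)
    (hy : ∀ t ∈ s, HasDerivAt y (y t * (-t + y t + 2 * z t) + α₂) t)
    (hz : ∀ t ∈ s, HasDerivAt z (z t * (t - 2 * y t - z t) + α₃) t) :
    ∀ t ∈ s,
      HasDerivAt (fun τ => x τ - α₂ / y τ)
        ((x t - α₂ / y t) * (t - (x t - α₂ / y t) - 2 * (z t + α₂ / y t)) + (α₁ + α₂)) t ∧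
      HasDerivAt y (y t * (-t + y t + 2 * (z t + α₂ / y t)) + (-α₂)) t ∧
      HasDerivAt (fun τ => z τ + α₂ / y τ)
        ((z t + α₂ / y t) * (t - 2 * y t - (z t + α₂ / y t)) + (α₃ + α₂)) t := by
  intro t ht
  have hq := hasDerivAt_const_div_riccati (hy0 t ht) (hy t ht)
  have hqy : α₂ / y t * y t = α₂ := div_mul_cancel₀ α₂ (hy0 t ht)
  refine ⟨(hx t ht).sub hq |>.congr_deriv ?_, (hy t ht).congr_deriv ?_,
    (hz t ht).add hq |>.congr_deriv ?_⟩
  · linear_combination hqy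
  · linear_combination -2 * hqy
  · linear_combination hqy
end

section
/- Let (x,y,z) satisfy dx/dt = x(t-x-2z)+α₁, dy/dt = y(-t+y+2z)+α₂, dz/dt = z(t-2y-z)+α₃ with z nowhere zero. Define x₁ = 1/(x+z), y₁ = (yz + α₂)z, z₁ = 1/z (assuming also x + z nowhere zero). Then (x₁, y₁, z₁) satisfies a system of ODEs whose right-hand sides are polynomials in (x₁, y₁, z₁, t); i.e., dx₁/dt, dy₁/dt, dz₁/dt are each equal to a polynomial expression in x₁, y₁, z₁, t with coefficients depending polynomially on α₁, α₂, α₃. -/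
/-!
Each of `x + z` and `z` satisfies a Riccati equation `u' = t u - u² + c` whose inhomogeneity `c`
depends only on `yz` and the parameters, and inversion turns such an equation into the polynomial
one `(1/u)' = 1 - t (1/u) - c (1/u)²`. The product `w = yz` obeys `w' = w (z - y) + α₂ z + α₃ y`,
which makes `(w + α₂) z` satisfy an equation polynomial in `w` and `t`. Finally `w` is itself
polynomial in the new coordinates: `w = y₁ z₁ - α₂`.
-/

open MvPolynomial

section Riccati

variable {𝕜 : Type*} [NontriviallyNormedField 𝕜]

theorem HasDerivAt.one_div_of_riccati {u : 𝕜 → 𝕜} {c t : 𝕜}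
    (hu : HasDerivAt u (t * u t - u t ^ 2 + c) t) (h0 : u t ≠ 0) :
    HasDerivAt (fun τ => 1 / u τ) (1 - t * (1 / u t) - c * (1 / u t) ^ 2) t := by
  simp only [one_div]
  refine (hu.inv h0).congr_deriv ?_
  field_simp
  ring

end Riccati

section System

variable {α₁ α₂ α₃ t : ℂ} {x y z : ℂ → ℂ}

theorem hasDerivAt_x_add_z_riccati
    (hx : HasDerivAt x (x t * (t - x t - 2 * z t) + α₁) t)
    (hz : HasDerivAt z (z t * (t - 2 * y t - z t) + α₃) t) :
    HasDerivAt (fun τ => x τ + z τ)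
      (t * (x t + z t) - (x t + z t) ^ 2 + (α₁ + α₃ - 2 * (y t * z t))) t :=
  (hx.add hz).congr_deriv (by ring)

theorem hasDerivAt_z_riccati
    (hz : HasDerivAt z (z t * (t - 2 * y t - z t) + α₃) t) :
    HasDerivAt z (t * z t - z t ^ 2 + (α₃ - 2 * (y t * z t))) t :=
  hz.congr_deriv (by ring)

theorem hasDerivAt_yz_add_mul_z
    (hy : HasDerivAt y (y t * (-t + y t + 2 * z t) + α₂) t)
    (hz : HasDerivAt z (z t * (t - 2 * y t - z t) + α₃) t) :
    HasDerivAt (fun τ => (y τ * z τ + α₂) * z τ)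
      (t * ((y t * z t + α₂) * z t) - 3 * (y t * z t) ^ 2
        + 2 * (α₃ - α₂) * (y t * z t) + α₂ * α₃) t :=
  (((hy.mul hz).add_const α₂).mul hz).congr_deriv (by simp only [Pi.mul_apply]; ring)

end System

/-- In the chart U₁: x₁ = 1/(x+z), y₁ = (yz+α₂)z, z₁ = 1/z, the vector field has
polynomial right-hand sides in (x₁, y₁, z₁, t) with coefficients polynomial in the
parameters (α₁, α₂, α₃). -/
theorem chart_U1_polynomial (α₁ α₂ α₃ : ℂ) (x y z : ℂ → ℂ) (s : Set ℂ)
    (hz0 : ∀ t ∈ s, z t ≠ 0) (hxz0 : ∀ t ∈ s, x t + z t ≠ 0)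
    (hx : ∀ t ∈ s, HasDerivAt x (x t * (t - x t - 2 * z t) + α₁) t)
    (hy : ∀ t ∈ s, HasDerivAt y (y t * (-t + y t + 2 * z t) + α₂) t)
    (hz : ∀ t ∈ s, HasDerivAt z (z t * (t - 2 * y t - z t) + α₃) t) :
    ∃ P₁ P₂ P₃ : MvPolynomial (Fin 7) ℂ, ∀ t ∈ s,
      (let v : Fin 7 → ℂ :=
        ![1 / (x t + z t), (y t * z t + α₂) * z t, 1 / z t, t, α₁, α₂, α₃];
       HasDerivAt (fun τ => 1 / (x τ + z τ)) (MvPolynomial.eval v P₁) t ∧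
       HasDerivAt (fun τ => (y τ * z τ + α₂) * z τ) (MvPolynomial.eval v P₂) t ∧
       HasDerivAt (fun τ => 1 / z τ) (MvPolynomial.eval v P₃) t) := by
  set W : MvPolynomial (Fin 7) ℂ := X 1 * X 2 - X 5
  refine ⟨1 - X 3 * X 0 - (X 4 + X 6 - 2 * W) * X 0 ^ 2,
    X 3 * X 1 - 3 * W ^ 2 + 2 * (X 6 - X 5) * W + X 5 * X 6,
    1 - X 3 * X 2 - (X 6 - 2 * W) * X 2 ^ 2, fun t ht => ?_⟩
  have hW : eval ![1 / (x t + z t), (y t * z t + α₂) * z t, 1 / z t, t, α₁, α₂, α₃] W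
      = y t * z t := by
    simp only [W, map_sub, map_mul, eval_X]
    change (y t * z t + α₂) * z t * (1 / z t) - α₂ = y t * z t
    field_simp [hz0 t ht]
    ring
  simp only [map_sub, map_add, map_mul, map_pow, map_one, map_ofNat, hW, eval_X]
  exact ⟨(hasDerivAt_x_add_z_riccati (hx t ht) (hz t ht)).one_div_of_riccati (hxz0 t ht),
    hasDerivAt_yz_add_mul_z (hy t ht) (hz t ht),
    (hasDerivAt_z_riccati (hz t ht)).one_div_of_riccati (hz0 t ht)⟩
end

section
/- Let (x,y,z) satisfy dx/dt = x(t-x-2z)+α₁, dy/dt = y(-t+y+2z)+α₂, dz/dt = z(t-2y-z)+α₃ with y nowhere zero. Define x₅ = 1/x, y₅ = 1/y, z₅ = (yz - α₃)y (assuming also x nowhere zero). Then dx₅/dt, dy₅/dt, dz₅/dt are polynomial expressions in (x₅, y₅, z₅, t) (with coefficients polynomial in α₁, α₂, α₃). -/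
/-!
Along a solution, `1/x` and `1/y` satisfy Riccati equations whose coefficients involve `z`, and
`z = (z₅ y₅ + α₃) y₅` is polynomial in the chart coordinates. For `z₅` the product rule gives,
with `w = y z = z₅ y₅ + α₃`, the identity `z₅' = -t z₅ + 3 w² + 2 (α₂ - α₃) w - α₂ α₃`, in which
no negative power of `y` survives.
-/

open MvPolynomial

theorem HasDerivAt.one_div_of_eq_mul_add {𝕜 : Type*} [NontriviallyNormedField 𝕜]
    {f : 𝕜 → 𝕜} {c a t : 𝕜}
    (hf : HasDerivAt f (f t * c + a) t) (h0 : f t ≠ 0) :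
    HasDerivAt (fun τ => 1 / f τ) (-(c * (1 / f t)) - a * (1 / f t) ^ 2) t := by
  simp only [one_div] at *
  refine (hf.inv h0).congr_deriv ?_
  field_simp
  ring

namespace ChartU5

-- `X 0, …, X 6` stand for `x₅, y₅, z₅, t, α₁, α₂, α₃`; `w` and `zPoly` express `y z` and `z`.
noncomputable def w : MvPolynomial (Fin 7) ℂ := X 2 * X 1 + X 6

noncomputable def zPoly : MvPolynomial (Fin 7) ℂ := w * X 1

noncomputable def P₁ : MvPolynomial (Fin 7) ℂ :=
  -(X 3 * X 0) + 1 + 2 * X 0 * zPoly - X 4 * X 0 ^ 2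

noncomputable def P₂ : MvPolynomial (Fin 7) ℂ :=
  X 3 * X 1 - 1 - 2 * zPoly * X 1 - X 5 * X 1 ^ 2

noncomputable def P₃ : MvPolynomial (Fin 7) ℂ :=
  -(X 3 * X 2) + 3 * w ^ 2 + 2 * (X 5 - X 6) * w - X 5 * X 6

section Eval

variable (x₅ y₅ z₅ t a₁ a₂ a₃ : ℂ)

theorem eval_w : eval ![x₅, y₅, z₅, t, a₁, a₂, a₃] w = z₅ * y₅ + a₃ := by
  simp [w]

theorem eval_P₁ : eval ![x₅, y₅, z₅, t, a₁, a₂, a₃] P₁ =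
    -(t * x₅) + 1 + 2 * x₅ * ((z₅ * y₅ + a₃) * y₅) - a₁ * x₅ ^ 2 := by
  simp [P₁, zPoly, eval_w]

theorem eval_P₂ : eval ![x₅, y₅, z₅, t, a₁, a₂, a₃] P₂ =
    t * y₅ - 1 - 2 * ((z₅ * y₅ + a₃) * y₅) * y₅ - a₂ * y₅ ^ 2 := by
  simp [P₂, zPoly, eval_w]

theorem eval_P₃ : eval ![x₅, y₅, z₅, t, a₁, a₂, a₃] P₃ =
    -(t * z₅) + 3 * (z₅ * y₅ + a₃) ^ 2 + 2 * (a₂ - a₃) * (z₅ * y₅ + a₃) - a₂ * a₃ := by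
  simp [P₃, eval_w]

end Eval

theorem mul_eq_chart {K : Type*} [Field K] {y z α₃ : K} (hy : y ≠ 0) :
    y * z = (y * z - α₃) * y * (1 / y) + α₃ := by
  field_simp
  ring

theorem hasDerivAt_chart_z {𝕜 : Type*} [NontriviallyNormedField 𝕜] {α₂ α₃ t : 𝕜}
    {y z : 𝕜 → 𝕜}
    (hy : HasDerivAt y (y t * (-t + y t + 2 * z t) + α₂) t)
    (hz : HasDerivAt z (z t * (t - 2 * y t - z t) + α₃) t) :
    HasDerivAt (fun τ => (y τ * z τ - α₃) * y τ)
      (-(t * ((y t * z t - α₃) * y t)) + 3 * (y t * z t) ^ 2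
        + 2 * (α₂ - α₃) * (y t * z t) - α₂ * α₃) t :=
  (((hy.fun_mul hz).sub_const α₃).fun_mul hy).congr_deriv (by ring)

end ChartU5

open ChartU5 in
/-- In the chart U₅: x₅ = 1/x, y₅ = 1/y, z₅ = (yz-α₃)y, the vector field has
polynomial right-hand sides in (x₅, y₅, z₅, t) with coefficients polynomial in
(α₁, α₂, α₃). -/
theorem chart_U5_polynomial (α₁ α₂ α₃ : ℂ) (x y z : ℂ → ℂ) (s : Set ℂ)
    (hx0 : ∀ t ∈ s, x t ≠ 0) (hy0 : ∀ t ∈ s, y t ≠ 0)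
    (hx : ∀ t ∈ s, HasDerivAt x (x t * (t - x t - 2 * z t) + α₁) t)
    (hy : ∀ t ∈ s, HasDerivAt y (y t * (-t + y t + 2 * z t) + α₂) t)
    (hz : ∀ t ∈ s, HasDerivAt z (z t * (t - 2 * y t - z t) + α₃) t) :
    ∃ P₁ P₂ P₃ : MvPolynomial (Fin 7) ℂ, ∀ t ∈ s,
      (let v : Fin 7 → ℂ :=
        ![1 / x t, 1 / y t, (y t * z t - α₃) * y t, t, α₁, α₂, α₃];
       HasDerivAt (fun τ => 1 / x τ) (MvPolynomial.eval v P₁) t ∧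
       HasDerivAt (fun τ => 1 / y τ) (MvPolynomial.eval v P₂) t ∧
       HasDerivAt (fun τ => (y τ * z τ - α₃) * y τ) (MvPolynomial.eval v P₃) t) := by
  refine ⟨P₁, P₂, P₃, fun t ht => ?_⟩
  intro v
  have hw := mul_eq_chart (z := z t) (α₃ := α₃) (hy0 t ht)
  have hzy : y t * z t * (1 / y t) = z t := by field_simp [hy0 t ht]
  simp only [v, eval_P₁, eval_P₂, eval_P₃, ← hw, hzy]
  refine ⟨?_, ?_, hasDerivAt_chart_z (hy t ht) (hz t ht)⟩
  · refine ((hx t ht).one_div_of_eq_mul_add (hx0 t ht)).congr_deriv ?_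
    field_simp [hx0 t ht]
    ring
  · refine ((hy t ht).one_div_of_eq_mul_add (hy0 t ht)).congr_deriv ?_
    field_simp [hy0 t ht]
    ring
end

section
/- Let (u₁, v₁, w₁) satisfy du₁/dt = 2u₁v₁ + (-u₁ - u₁²)/w₁ + α₁w₁ - α₃u₁w₁, dv₁/dt = -tv₁ + v₁² + 2v₁/w₁ + α₂, dw₁/dt = 1 - tw₁ + 2v₁w₁ - α₃w₁², with w₁ and u₁+1 nowhere zero. Define u₂ = w₁/(u₁+1), v₂ = v₁, w₂ = w₁. Then du₂/dt = 1 - tu₂ + 2u₂²v₂/w₂ - α₁u₂² - α₃u₂², dv₂/dt = -tv₂ + v₂² + 2v₂/w₂ + α₂, dw₂/dt = 1 - tw₂ + 2v₂w₂ - α₃w₂². -/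
theorem flop_quotient_rule_eq {K : Type*} [Field K] (α₁ α₃ t u v w : K)
    (hw : w ≠ 0) (hu : u + 1 ≠ 0) :
    ((1 - t * w + 2 * v * w - α₃ * w ^ 2) * (u + 1)
        - w * (2 * u * v + (-u - u ^ 2) / w + α₁ * w - α₃ * u * w)) / (u + 1) ^ 2
      = 1 - t * (w / (u + 1)) + 2 * (w / (u + 1)) ^ 2 * v / w
          - α₁ * (w / (u + 1)) ^ 2 - α₃ * (w / (u + 1)) ^ 2 := by
  field_simp
  ring

/-- Step 3 (the flop/blow-down): the coordinate change u₂ = w₁/(u₁+1), v₂ = v₁,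
w₂ = w₁ transforms the system of Step 2 into system (4). -/
theorem flop_step3 (α₁ α₂ α₃ : ℂ) (u₁ v₁ w₁ : ℂ → ℂ) (s : Set ℂ)
    (hw0 : ∀ t ∈ s, w₁ t ≠ 0) (hu0 : ∀ t ∈ s, u₁ t + 1 ≠ 0)
    (hu : ∀ t ∈ s, HasDerivAt u₁
      (2 * u₁ t * v₁ t + (-u₁ t - (u₁ t)^2) / w₁ t + α₁ * w₁ t - α₃ * u₁ t * w₁ t) t)
    (hv : ∀ t ∈ s, HasDerivAt v₁
      (-t * v₁ t + (v₁ t)^2 + 2 * v₁ t / w₁ t + α₂) t)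
    (hw : ∀ t ∈ s, HasDerivAt w₁
      (1 - t * w₁ t + 2 * v₁ t * w₁ t - α₃ * (w₁ t)^2) t) :
    ∀ t ∈ s,
      (let u₂ := w₁ t / (u₁ t + 1); let v₂ := v₁ t; let w₂ := w₁ t;
       HasDerivAt (fun τ => w₁ τ / (u₁ τ + 1))
         (1 - t * u₂ + 2 * u₂^2 * v₂ / w₂ - α₁ * u₂^2 - α₃ * u₂^2) t ∧
       HasDerivAt v₁ (-t * v₂ + v₂^2 + 2 * v₂ / w₂ + α₂) t ∧
       HasDerivAt w₁ (1 - t * w₂ + 2 * v₂ * w₂ - α₃ * w₂^2) t) := by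
  intro t ht
  refine ⟨?_, hv t ht, hw t ht⟩
  rw [← flop_quotient_rule_eq α₁ α₃ t (u₁ t) (v₁ t) (w₁ t) (hw0 t ht) (hu0 t ht)]
  exact (hw t ht).div ((hu t ht).add_const 1) (hu0 t ht)
end

section
/- After the blow-up x₃ = p, y₃ = q/p, z₃ = r/p at the point P₃, the system becomes holomorphic: if (p,q,r) satisfies dp/dt = -α₁p² - tp + 2r + 1, dq/dt = (q + q(-2tp+q+4r))/p + α₂p - α₁pq, dr/dt = (r + r(r-2q))/p - α₁pr + α₃p with p nowhere zero, then (x₃,y₃,z₃) = (p, q/p, r/p) satisfies a system of ODEs whose right-hand sides are polynomials in (x₃, y₃, z₃, t, α₁, α₂, α₃). -/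
/-!
By the quotient rule, `(q/p)' = (q' p - q p') / p²`. The pole `q/p` of `q'` contributes `q` to
`q' p`, which is cancelled by the constant term `1` of `p'` in `q p'`; every remaining term of
the numerator is a quadratic form in `(p, q, r)`, hence `p²` times a polynomial once
`q = p y₃` and `r = p z₃`. The same happens for `r/p`.
-/

open MvPolynomial

theorem HasDerivAt.div_of_mul_sub_mul_eq {𝕜 : Type*} [NontriviallyNormedField 𝕜]
    {f g : 𝕜 → 𝕜} {f' g' c x : 𝕜} (hf : HasDerivAt f f' x) (hg : HasDerivAt g g' x)
    (hx : g x ≠ 0) (h : f' * g x - f x * g' = c * g x ^ 2) :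
    HasDerivAt (fun y => f y / g y) c x := by
  have hquot := hf.div hg hx
  rwa [h, mul_div_cancel_right₀ c (pow_ne_zero 2 hx)] at hquot

section BlowupP3

variable {K : Type*} [Field K] (α₁ α₂ α₃ t p q r : K)

theorem blowupP3_x_eq (hp : p ≠ 0) :
    -α₁ * p ^ 2 - t * p + 2 * r + 1 = -α₁ * p ^ 2 - t * p + 2 * p * (r / p) + 1 := by
  field_simp

theorem blowupP3_y_numerator_eq (hp : p ≠ 0) :
    ((q + q * (-2 * t * p + q + 4 * r)) / p + α₂ * p - α₁ * p * q) * p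
        - q * (-α₁ * p ^ 2 - t * p + 2 * r + 1)
      = ((q / p) ^ 2 + 2 * (q / p) * (r / p) - t * (q / p) + α₂) * p ^ 2 := by
  field_simp
  ring

theorem blowupP3_z_numerator_eq (hp : p ≠ 0) :
    ((r + r * (r - 2 * q)) / p - α₁ * p * r + α₃ * p) * p
        - r * (-α₁ * p ^ 2 - t * p + 2 * r + 1)
      = (-(r / p) ^ 2 - 2 * (q / p) * (r / p) + t * (r / p) + α₃) * p ^ 2 := by
  field_simp
  ring

end BlowupP3

/-- Blow-up at P₃: in the coordinates x₃ = p, y₃ = q/p, z₃ = r/p the system has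
polynomial right-hand sides in (x₃, y₃, z₃, t, α₁, α₂, α₃). -/
theorem blowup_P3_polynomial (α₁ α₂ α₃ : ℂ) (p q r : ℂ → ℂ) (s : Set ℂ)
    (hp0 : ∀ t ∈ s, p t ≠ 0)
    (hp : ∀ t ∈ s, HasDerivAt p (-α₁ * (p t)^2 - t * p t + 2 * r t + 1) t)
    (hq : ∀ t ∈ s, HasDerivAt q
      ((q t + q t * (-2 * t * p t + q t + 4 * r t)) / p t
        + α₂ * p t - α₁ * p t * q t) t)
    (hr : ∀ t ∈ s, HasDerivAt r
      ((r t + r t * (r t - 2 * q t)) / p t - α₁ * p t * r t + α₃ * p t) t) :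
    ∃ P₁ P₂ P₃ : MvPolynomial (Fin 7) ℂ, ∀ t ∈ s,
      (let v : Fin 7 → ℂ := ![p t, q t / p t, r t / p t, t, α₁, α₂, α₃];
       HasDerivAt p (MvPolynomial.eval v P₁) t ∧
       HasDerivAt (fun τ => q τ / p τ) (MvPolynomial.eval v P₂) t ∧
       HasDerivAt (fun τ => r τ / p τ) (MvPolynomial.eval v P₃) t) := by
  refine ⟨-X 4 * X 0 ^ 2 - X 3 * X 0 + 2 * X 0 * X 2 + 1,
    X 1 ^ 2 + 2 * X 1 * X 2 - X 3 * X 1 + X 5,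
    -X 2 ^ 2 - 2 * X 1 * X 2 + X 3 * X 2 + X 6, fun t ht => ?_⟩
  have hpt := hp0 t ht
  simp only [map_add, map_sub, map_mul, map_neg, map_pow, map_one, map_ofNat, eval_X,
    Matrix.cons_val]
  exact ⟨blowupP3_x_eq α₁ t (p t) (r t) hpt ▸ hp t ht,
    (hq t ht).div_of_mul_sub_mul_eq (hp t ht) hpt
      (blowupP3_y_numerator_eq α₁ α₂ t (p t) (q t) (r t) hpt),
    (hr t ht).div_of_mul_sub_mul_eq (hp t ht) hpt
      (blowupP3_z_numerator_eq α₁ α₃ t (p t) (q t) (r t) hpt)⟩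
end
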